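/- Let P = P₀⊕P₁ be a ℤ₂-graded vector space over a field of characteristic 0 with a bilinear product xy satisfying, for all homogeneous x,y,z: 3(xy)z - 3x(yz) + (-1)^{|x||y|}(yx)z - (-1)^{|y||z|}(xz)y - (-1)^{|x||y|+|x||z|}(yz)x + (-1)^{|x||z|+|y||z|}(zx)y = 0. Then the product is superflexive: A(x,y,z) + (-1)^{|x||z|+|x||y|+|y||z|} A(z,y,x) = 0 for all homogeneous x,y,z, where A(x,y,z) = (xy)z - x(yz). -/

import Mathlib

/-!
Write `S(x, y, z)` for the left side of the hypothesis and `σ` for the total sign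
`(-1)^{|x||z|+|x||y|+|y||z|}`. Since every sign squares to `1`, multiplying `S(z, y, x)` by `σ`
turns its four non-associator terms into the negatives of those of `S(x, y, z)`, so
`S(x, y, z) + σ S(z, y, x) = 3 (A(x, y, z) + σ A(z, y, x))`, and `3` is invertible.
-/

/-- The super sign `(-1)^{ij}` for degrees `i, j : ZMod 2`. -/
def ssgn (i j : ZMod 2) : ℤ := (-1) ^ (i.val * j.val)

theorem ssgn_comm (i j : ZMod 2) : ssgn i j = ssgn j i := by
  rw [ssgn, ssgn, mul_comm]

theorem ssgn_mul_self (i j : ZMod 2) : ssgn i j * ssgn i j = 1 := by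
  rw [ssgn, ← mul_pow, neg_one_mul, neg_neg, one_pow]

section SuperPoisson

variable {K V : Type*} [Field K] [AddCommGroup V] [Module K V] (m : V →ₗ[K] V →ₗ[K] V)

def assoc (x y z : V) : V := m (m x y) z - m x (m y z)

/-- The left side of the super Poisson identity, with the signs `a = ε(|x|,|y|)`,
`b = ε(|x|,|z|)`, `c = ε(|y|,|z|)` of homogeneous `x, y, z` as parameters. -/
def superPoissonDefect (a b c : ℤ) (x y z : V) : V :=
  (3:K) • assoc m x y z + a • m (m y x) z - c • m (m x z) y - (a * b) • m (m y z) x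
    + (b * c) • m (m z x) y

theorem superPoissonDefect_add_smul_superPoissonDefect_swap {a b c : ℤ} (ha : a * a = 1)
    (hb : b * b = 1) (hc : c * c = 1) (x y z : V) :
    superPoissonDefect m a b c x y z + (b * a * c) • superPoissonDefect m c b a z y x
      = (3:K) • (assoc m x y z + (b * a * c) • assoc m z y x) := by
  have hyzx : b * a * c * c = a * b := by linear_combination (a * b) * hc
  have hzxy : b * a * c * a = b * c := by linear_combination (b * c) * ha
  have hyxz : b * a * c * (c * b) = a := by linear_combination (a * b * b) * hc + a * hb
  have hxzy : b * a * c * (b * a) = c := by linear_combination (c * a * a) * hb + c * ha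
  simp only [superPoissonDefect, assoc]
  linear_combination (norm := module) hyzx • m (m y z) x - hzxy • m (m z x) y
    - hyxz • m (m y x) z + hxzy • m (m x z) y

end SuperPoisson

theorem stmt14_general (K V : Type*) [Field K] [CharZero K] [AddCommGroup V] [Module K V]
    (G : ZMod 2 → Submodule K V)
    (m : V →ₗ[K] V →ₗ[K] V)
    (h : ∀ (i j k : ZMod 2), ∀ x ∈ G i, ∀ y ∈ G j, ∀ z ∈ G k,
      (3:K) • m (m x y) z - (3:K) • m x (m y z)
      + ssgn i j • m (m y x) z - ssgn j k • m (m x z) y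
      - (ssgn i j * ssgn i k) • m (m y z) x
      + (ssgn i k * ssgn j k) • m (m z x) y = 0) :
    ∀ (i j k : ZMod 2), ∀ x ∈ G i, ∀ y ∈ G j, ∀ z ∈ G k,
      (m (m x y) z - m x (m y z))
      + (ssgn i k * ssgn i j * ssgn j k) • (m (m z y) x - m z (m y x)) = 0 := by
  intro i j k x hx y hy z hz
  have hxyz : superPoissonDefect m (ssgn i j) (ssgn i k) (ssgn j k) x y z = 0 := by
    rw [superPoissonDefect, assoc, smul_sub]
    exact h i j k x hx y hy z hz
  have hzyx : superPoissonDefect m (ssgn j k) (ssgn i k) (ssgn i j) z y x = 0 := by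
    rw [superPoissonDefect, assoc, smul_sub, ← ssgn_comm k j, ← ssgn_comm j i, ← ssgn_comm k i]
    exact h k j i z hz y hy x hx
  have key := superPoissonDefect_add_smul_superPoissonDefect_swap m (ssgn_mul_self i j)
    (ssgn_mul_self i k) (ssgn_mul_self j k) x y z
  rw [hxyz, hzyx, smul_zero, add_zero, eq_comm, smul_eq_zero] at key
  exact key.resolve_left three_ne_zero

/-- A bilinear product on a ℤ₂-graded space satisfying the super Poisson identity
is superflexive: `A(x,y,z) + (-1)^{|x||z|+|x||y|+|y||z|} A(z,y,x) = 0`. -/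
theorem stmt14 (K V : Type*) [Field K] [CharZero K] [AddCommGroup V] [Module K V]
    (G : ZMod 2 → Submodule K V) (hG : DirectSum.IsInternal G)
    (m : V →ₗ[K] V →ₗ[K] V)
    (h : ∀ (i j k : ZMod 2), ∀ x ∈ G i, ∀ y ∈ G j, ∀ z ∈ G k,
      (3:K) • m (m x y) z - (3:K) • m x (m y z)
      + ssgn i j • m (m y x) z - ssgn j k • m (m x z) y
      - (ssgn i j * ssgn i k) • m (m y z) x
      + (ssgn i k * ssgn j k) • m (m z x) y = 0) :
    ∀ (i j k : ZMod 2), ∀ x ∈ G i, ∀ y ∈ G j, ∀ z ∈ G k,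
      (m (m x y) z - m x (m y z))
      + (ssgn i k * ssgn i j * ssgn j k) • (m (m z y) x - m z (m y x)) = 0 :=
  stmt14_general K V G m h
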